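/- arXiv:2102.12535 — 2 statements merged into one kernel-verified Lean document; each statement's English description precedes it below -/
import Mathlib

section
/- For a random caterpillar with m ≥ 2 spine nodes, the variance of the Zagreb index Z_n equals 2n((m-1)n + 3m - 7)/m^2. -/
open Finset Filter MeasureTheory

/-- Number of leaves attached to spine node `i` given attachment choices `ω`. -/
def leafCount {m n : ℕ} (ω : Fin n → Fin m) (i : Fin m) : ℕ :=
  (Finset.univ.filter (fun j => ω j = i)).card

/-- Degree of spine node `i` in the caterpillar: its leaf count plus 1 for an
end spine node, plus 2 for an interior spine node. -/
def degS {m n : ℕ} (ω : Fin n → Fin m) (i : Fin m) : ℕ :=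
  leafCount ω i + (if i.val = 0 ∨ i.val = m - 1 then 1 else 2)

/-- Zagreb index: sum of squared degrees of all nodes (each of the `n` leaves has degree 1). -/
def zagreb {m n : ℕ} (ω : Fin n → Fin m) : ℕ :=
  (∑ i, (degS ω i) ^ 2) + n

/-! Adding one leaf at spine node `x` raises `Z` by `2 deg(x) + 2`. Averaging over `x`, and using
`∑ deg = n + 2m - 2` and `∑ deg² = Z - n`, gives linear recurrences in `n` for the first two
moments of `Z_n`; they are solved by quadratic and quartic polynomials in `n`, whose combination
is the variance. -/

theorem sum_pi_fin_succ {α M : Type*} [Fintype α] [AddCommMonoid M] {n : ℕ}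
    (g : (Fin (n + 1) → α) → M) :
    ∑ ω, g ω = ∑ x, ∑ ω : Fin n → α, g (Fin.cons x ω) := by
  rw [← (Fin.consEquiv fun _ => α).sum_comp, Fintype.sum_prod_type]
  rfl

theorem sum_ite_val_eq_zero_or_sub_one {R : Type*} [CommRing R] {m : ℕ} (hm : 2 ≤ m) (a b : R) :
    ∑ i : Fin m, (if i.val = 0 ∨ i.val = m - 1 then a else b) = 2 * a + (m - 2) * b := by
  have hends : #{i : Fin m | i.val = 0 ∨ i.val = m - 1} = 2 := by
    have hpair : ({i : Fin m | i.val = 0 ∨ i.val = m - 1} : Finset _)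
        = {⟨0, by omega⟩, ⟨m - 1, by omega⟩} := by
      ext i
      simp [Fin.ext_iff]
    rw [hpair, card_pair]
    simp [Fin.ext_iff]
    omega
  have hinner : #{i : Fin m | ¬(i.val = 0 ∨ i.val = m - 1)} = m - 2 := by
    rw [filter_not, card_sdiff_of_subset (filter_subset _ _), hends, card_univ, Fintype.card_fin]
  rw [sum_ite, sum_const, sum_const, hends, hinner, nsmul_eq_mul, nsmul_eq_mul, Nat.cast_sub hm]
  push_cast
  ring

section Caterpillar

variable {m n : ℕ}

theorem leafCount_cons (ω : Fin n → Fin m) (x i : Fin m) :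
    leafCount (Fin.cons x ω) i = leafCount ω i + if x = i then 1 else 0 := by
  simp only [leafCount, card_filter, Fin.sum_univ_succ, Fin.cons_zero, Fin.cons_succ]
  ring

theorem degS_cons (ω : Fin n → Fin m) (x i : Fin m) :
    degS (Fin.cons x ω) i = degS ω i + if x = i then 1 else 0 := by
  simp only [degS, leafCount_cons]
  ring

theorem zagreb_cons (ω : Fin n → Fin m) (x : Fin m) :
    zagreb (Fin.cons x ω) = zagreb ω + 2 * degS ω x + 2 := by
  have hsq : ∀ i, (degS ω i + if x = i then 1 else 0) ^ 2
      = degS ω i ^ 2 + ((if x = i then 2 * degS ω i else 0) + if x = i then 1 else 0) := by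
    intro i
    split_ifs <;> ring
  simp only [zagreb, degS_cons, hsq, sum_add_distrib, sum_ite_eq, mem_univ, if_true]
  ring

theorem sum_leafCount (ω : Fin n → Fin m) : ∑ i, leafCount ω i = n := by
  simpa [leafCount] using (card_eq_sum_card_fiberwise fun j (_ : j ∈ univ) => mem_univ (ω j)).symm

theorem sum_degS (hm : 2 ≤ m) (ω : Fin n → Fin m) : ∑ i, (degS ω i : ℝ) = n + 2 * m - 2 := by
  have hleaves : ∑ i, (leafCount ω i : ℝ) = n := by exact_mod_cast sum_leafCount ω
  simp only [degS, Nat.cast_add, Nat.cast_ite, Nat.cast_one, Nat.cast_ofNat, sum_add_distrib,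
    hleaves, sum_ite_val_eq_zero_or_sub_one hm]
  ring

theorem cast_zagreb (ω : Fin n → Fin m) : (zagreb ω : ℝ) = ∑ i, (degS ω i : ℝ) ^ 2 + n := by
  simp [zagreb]

theorem cast_zagreb_of_fin_zero (hm : 2 ≤ m) (ω : Fin 0 → Fin m) :
    (zagreb ω : ℝ) = 4 * m - 6 := by
  have hdeg : ∀ i, (degS ω i : ℝ) ^ 2 = if i.val = 0 ∨ i.val = m - 1 then 1 else 4 := by
    intro i
    simp only [degS, leafCount, univ_eq_empty, filter_empty, card_empty, zero_add]
    split_ifs <;> norm_num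
  rw [cast_zagreb, Fintype.sum_congr _ _ hdeg, sum_ite_val_eq_zero_or_sub_one hm]
  push_cast
  ring

theorem sum_zagreb_cons (hm : 2 ≤ m) (ω : Fin n → Fin m) :
    ∑ x, (zagreb (Fin.cons x ω) : ℝ) = m * zagreb ω + 2 * (n + 3 * m - 2) := by
  simp only [zagreb_cons, Nat.cast_add, Nat.cast_mul, Nat.cast_ofNat, sum_add_distrib,
    ← mul_sum, sum_degS hm, sum_const, card_univ, Fintype.card_fin, nsmul_eq_mul]
  ring

theorem sum_zagreb_cons_sq (hm : 2 ≤ m) (ω : Fin n → Fin m) :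
    ∑ x, (zagreb (Fin.cons x ω) : ℝ) ^ 2
      = m * zagreb ω ^ 2 + 4 * (n + 3 * m - 1) * zagreb ω + 4 * (n + 5 * m - 4) := by
  have hexpand : ∀ x, (zagreb (Fin.cons x ω) : ℝ) ^ 2
      = (zagreb ω + 2) ^ 2 + (4 * (zagreb ω + 2) * degS ω x + 4 * (degS ω x : ℝ) ^ 2) := by
    intro x
    rw [zagreb_cons]
    push_cast
    ring
  simp only [hexpand, sum_add_distrib, ← mul_sum, sum_degS hm, sum_const, card_univ,
    Fintype.card_fin, nsmul_eq_mul]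
  rw [eq_sub_of_add_eq (cast_zagreb ω).symm]
  ring

theorem mul_sum_zagreb (hm : 2 ≤ m) (n : ℕ) :
    (m : ℝ) * ∑ ω : Fin n → Fin m, (zagreb ω : ℝ)
      = m ^ n * (n ^ 2 + (6 * m - 5) * n + m * (4 * m - 6)) := by
  induction n with
  | zero => simp [cast_zagreb_of_fin_zero hm]
  | succ n ih =>
    simp only [sum_pi_fin_succ, sum_comm (γ := Fin m), sum_zagreb_cons hm, sum_add_distrib,
      ← mul_sum, sum_const, card_univ, Fintype.card_fun, Fintype.card_fin, nsmul_eq_mul]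
    push_cast
    linear_combination (m : ℝ) * ih

theorem sq_mul_sum_zagreb_sq (hm : 2 ≤ m) (n : ℕ) :
    (m : ℝ) ^ 2 * ∑ ω : Fin n → Fin m, (zagreb ω : ℝ) ^ 2
      = m ^ n * (2 * n * ((m - 1) * n + 3 * m - 7)
          + (n ^ 2 + (6 * m - 5) * n + m * (4 * m - 6)) ^ 2) := by
  induction n with
  | zero => simp [cast_zagreb_of_fin_zero hm]; ring
  | succ n ih =>
    simp only [sum_pi_fin_succ, sum_comm (γ := Fin m), sum_zagreb_cons_sq hm, sum_add_distrib,
      ← mul_sum, sum_const, card_univ, Fintype.card_fun, Fintype.card_fin, nsmul_eq_mul]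
    push_cast
    linear_combination (m : ℝ) * ih + 4 * (n + 3 * m - 1) * m * mul_sum_zagreb hm n

end Caterpillar

/-- The variance of the Zagreb index of a random caterpillar with `m ≥ 2` spine nodes
equals `2n((m-1)n + 3m - 7)/m²`. -/
theorem variance_zagreb (m n : ℕ) (hm : 2 ≤ m) :
    (∑ ω : Fin n → Fin m, (zagreb ω : ℝ) ^ 2) / (m : ℝ) ^ n
      - ((∑ ω : Fin n → Fin m, (zagreb ω : ℝ)) / (m : ℝ) ^ n) ^ 2
      = 2 * n * ((m - 1) * n + 3 * m - 7) / m ^ 2 := by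
  have hmn : (m : ℝ) ^ n ≠ 0 := by positivity
  set mean := (∑ ω : Fin n → Fin m, (zagreb ω : ℝ)) / (m : ℝ) ^ n
  have hmean : (m : ℝ) * mean = n ^ 2 + (6 * m - 5) * n + m * (4 * m - 6) := by
    rw [mul_div_assoc', mul_sum_zagreb hm, mul_div_cancel_left₀ _ hmn]
  have hsecond : (m : ℝ) ^ 2 * ((∑ ω : Fin n → Fin m, (zagreb ω : ℝ) ^ 2) / (m : ℝ) ^ n)
      = 2 * n * ((m - 1) * n + 3 * m - 7) + (n ^ 2 + (6 * m - 5) * n + m * (4 * m - 6)) ^ 2 := by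
    rw [mul_div_assoc', sq_mul_sum_zagreb_sq hm, mul_div_cancel_left₀ _ hmn]
  rw [eq_div_iff (by positivity)]
  linear_combination hsecond - (m * mean + n ^ 2 + (6 * m - 5) * n + m * (4 * m - 6)) * hmean
end

section
/- In the random caterpillar martingale M_n = Z_n - n(n+6m-5)/m, the increments satisfy |M_j - M_{j-1}| ≤ ((2m+2)/m)·j + (10m-6)/m almost surely for every j ≥ 1. -/
open Finset Filter MeasureTheory
open scoped Classical ENNReal

lemma leafCount_snoc {m n : ℕ} (h : Fin n → Fin m) (c i : Fin m) :
    leafCount (Fin.snoc h c) i = leafCount h i + (if c = i then 1 else 0) := by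
  unfold leafCount
  rw [Finset.card_filter, Finset.card_filter, Fin.sum_univ_castSucc]
  simp [Fin.snoc_castSucc, Fin.snoc_last]

lemma degS_snoc {m n : ℕ} (h : Fin n → Fin m) (c i : Fin m) :
    degS (Fin.snoc h c) i = degS h i + (if c = i then 1 else 0) := by
  unfold degS
  rw [leafCount_snoc]
  ring

lemma zagreb_snoc {m n : ℕ} (h : Fin n → Fin m) (c : Fin m) :
    zagreb (Fin.snoc h c) = zagreb h + 2 * degS h c + 2 := by
  unfold zagreb
  have key : ∀ i, (degS (Fin.snoc h c) i)^2
      = (degS h i)^2 + (if c = i then 2 * degS h i + 1 else 0) := by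
    intro i
    rw [degS_snoc]
    split <;> ring
  rw [Finset.sum_congr rfl (fun i _ => key i), Finset.sum_add_distrib,
    Finset.sum_ite_eq]
  simp
  ring

lemma degS_le {m n : ℕ} (h : Fin n → Fin m) (c : Fin m) : degS h c ≤ n + 2 := by
  unfold degS leafCount
  have h1 : (Finset.univ.filter (fun j => h j = c)).card ≤ n := by
    calc (Finset.univ.filter (fun j => h j = c)).card
        ≤ (Finset.univ : Finset (Fin n)).card :=
          Finset.card_le_card (Finset.filter_subset _ _)
    _ = n := by simp
  split <;> omega

/-- The increments of the martingale `M_n = Z_n - n(n+6m-5)/m` satisfy the almost-sure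
bound `|M_j - M_{j-1}| ≤ ((2m+2)/m)·j + (10m-6)/m` (here `j = n+1`, for every history
`h` of the first `n` choices and every next choice `c`). -/
theorem zagreb_martingale_increment_bound (m : ℕ) (hm : 2 ≤ m)
    (M : ∀ {k : ℕ}, (Fin k → Fin m) → ℝ)
    (hM : ∀ {k : ℕ} (ω : Fin k → Fin m),
      M ω = (zagreb ω : ℝ) - k * (k + 6 * m - 5) / m) :
    ∀ (n : ℕ) (h : Fin n → Fin m) (c : Fin m),
      |M (Fin.snoc h c) - M h| ≤ ((2 * m + 2) / m) * (n + 1 : ℝ) + (10 * m - 6) / m := by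
  intro n h c
  have hm0 : (0:ℝ) < m := by
    have : 0 < m := by omega
    exact_mod_cast this
  have hmR : (2:ℝ) ≤ m := by exact_mod_cast hm
  set d : ℕ := degS h c with hdd
  have hd : (d:ℝ) ≤ n + 2 := by exact_mod_cast degS_le h c
  have hd0 : (0:ℝ) ≤ (d:ℝ) := Nat.cast_nonneg _
  have hn0 : (0:ℝ) ≤ (n:ℝ) := Nat.cast_nonneg _
  have diff_eq : M (Fin.snoc h c) - M h
      = (2*(d:ℝ)+2) - (2*(n:ℝ)+6*(m:ℝ)-4)/m := by
    rw [hM, hM, zagreb_snoc]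
    push_cast
    field_simp
    ring
  rw [diff_eq]
  have e1 : (2*(d:ℝ)+2) - (2*(n:ℝ)+6*(m:ℝ)-4)/m
      = ((2*(d:ℝ)+2)*m - (2*(n:ℝ)+6*(m:ℝ)-4))/m := by
    field_simp
  have e2 : ((2 * (m:ℝ) + 2) / m) * (n + 1 : ℝ) + (10 * (m:ℝ) - 6) / m
      = ((2*(m:ℝ)+2)*((n:ℝ)+1) + (10*(m:ℝ)-6))/m := by
    field_simp
  rw [e1, e2, abs_div, abs_of_pos hm0, div_le_div_iff₀ hm0 hm0]
  have habs : |(2 * (d:ℝ) + 2) * m - (2 * (n:ℝ) + 6 * m - 4)|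
      ≤ (2 * (m:ℝ) + 2) * (n + 1) + (10 * m - 6) := by
    rw [abs_le]
    constructor
    · nlinarith [mul_nonneg hd0 hm0.le, mul_nonneg hn0 hm0.le]
    · nlinarith [mul_nonneg (sub_nonneg.2 hd) hm0.le, mul_nonneg hn0 hm0.le]
  exact mul_le_mul_of_nonneg_right habs hm0.le
end
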